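/- arXiv:1412.1062 — 2 statements merged into one kernel-verified Lean document; each statement's English description precedes it below -/
import Mathlib

section
/- Let n ≥ 1, let B be a continuous map from ℝⁿ to the space of continuous bilinear forms on ℝⁿ, and let f : ℝⁿ → ℝ be a C² function satisfying D²f(x)(v,w) = f(x)·B(x)(v,w) for all x ∈ ℝⁿ and all v, w ∈ ℝⁿ. If f is not identically zero, then the gradient ∇f(p) is nonzero at every point p with f(p) = 0; in particular 0 is a regular value of f and the zero set f⁻¹(0) contains no critical point of f. -/
/-!
Restricted to the segment `t ↦ p + t • (x - p)`, the pair `y = (f, ∂ᵥf)` with `v = x - p`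
solves the linear system `y' = (∂ᵥf, f · B(v, v))`, whose coefficient is bounded on `[0, 1]`.
If `f` and `∇f` vanish at `p`, then `y(0) = 0` and Grönwall's inequality forces `y ≡ 0`,
so `f x = 0` for every `x`.
-/
open Set AffineMap

theorem norm_prodMk_mul_le {a b β C : ℝ} (hβ : ‖β‖ ≤ C) :
    ‖(b, a * β)‖ ≤ max C 1 * ‖(a, b)‖ := by
  rw [Prod.norm_def, Prod.norm_def, norm_mul]
  refine max_le ?_ ?_
  · calc ‖b‖ ≤ 1 * max ‖a‖ ‖b‖ := by rw [one_mul]; exact le_max_right _ _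
      _ ≤ max C 1 * max ‖a‖ ‖b‖ := by gcongr; exact le_max_right _ _
  · calc ‖a‖ * ‖β‖ ≤ max ‖a‖ ‖b‖ * max C 1 :=
          mul_le_mul (le_max_left _ _) (hβ.trans (le_max_left _ _)) (norm_nonneg _)
            ((norm_nonneg _).trans (le_max_left _ _))
      _ = max C 1 * max ‖a‖ ‖b‖ := mul_comm _ _

variable {E : Type*} [NormedAddCommGroup E] [NormedSpace ℝ E]
  {f : E → ℝ} {B : E → E →L[ℝ] E →L[ℝ] ℝ}

theorem hasDerivAt_apply_fderiv_lineMap (hf : ContDiff ℝ 2 f)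
    (heq : ∀ x v w, fderiv ℝ (fderiv ℝ f) x v w = f x * B x v w) (p x : E) (t : ℝ) :
    HasDerivAt (fun t => (f (lineMap p x t), fderiv ℝ f (lineMap p x t) (x - p)))
      (fderiv ℝ f (lineMap p x t) (x - p),
        f (lineMap p x t) * B (lineMap p x t) (x - p) (x - p)) t := by
  have hf1 : Differentiable ℝ f := hf.differentiable (by norm_num)
  have hf2 : Differentiable ℝ (fderiv ℝ f) :=
    (hf.fderiv_right (m := 1) (by norm_num)).differentiable (by norm_num)
  have hline : HasDerivAt (lineMap p x) (x - p) t := hasDerivAt_lineMap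
  refine ((hf1 _).hasFDerivAt.comp_hasDerivAt t hline).prodMk ?_
  have h := ((hf2 _).hasFDerivAt.comp_hasDerivAt t hline).clm_apply (hasDerivAt_const t (x - p))
  simpa only [Function.comp_apply, heq, map_zero, add_zero] using h

theorem eq_zero_of_fderiv_fderiv_eq_mul (hB : Continuous B) (hf : ContDiff ℝ 2 f)
    (heq : ∀ x v w, fderiv ℝ (fderiv ℝ f) x v w = f x * B x v w)
    {p : E} (hp : f p = 0) (hdp : fderiv ℝ f p = 0) (x : E) : f x = 0 := by
  have hBv : Continuous fun t : ℝ => B (lineMap p x t) (x - p) (x - p) :=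
    ((hB.comp lineMap_continuous).clm_apply continuous_const).clm_apply continuous_const
  obtain ⟨C, hC⟩ := (isCompact_Icc (a := (0 : ℝ)) (b := 1)).exists_bound_of_continuousOn
    hBv.continuousOn
  have hy := hasDerivAt_apply_fderiv_lineMap hf heq p x
  have hy_zero := eq_zero_of_abs_deriv_le_mul_abs_self_of_eq_zero_right
    (fun t _ => (hy t).continuousAt.continuousWithinAt) (fun t _ => (hy t).hasDerivWithinAt)
    (by simp [hp, hdp]) (fun t ht => norm_prodMk_mul_le (hC t (Ico_subset_Icc_self ht)))
    1 (right_mem_Icc.2 zero_le_one)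
  simpa using congrArg Prod.fst hy_zero

theorem stmt_2_general (n : ℕ)
    (B : EuclideanSpace ℝ (Fin n) →
      EuclideanSpace ℝ (Fin n) →L[ℝ] EuclideanSpace ℝ (Fin n) →L[ℝ] ℝ)
    (hB : Continuous B)
    (f : EuclideanSpace ℝ (Fin n) → ℝ) (hf : ContDiff ℝ 2 f)
    (heq : ∀ (x v w : EuclideanSpace ℝ (Fin n)),
      fderiv ℝ (fderiv ℝ f) x v w = f x * B x v w)
    (hne : ∃ x, f x ≠ 0) :
    ∀ p : EuclideanSpace ℝ (Fin n), f p = 0 → gradient f p ≠ 0 := by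
  intro p hp hgrad
  obtain ⟨x, hx⟩ := hne
  exact hx (eq_zero_of_fderiv_fderiv_eq_mul hB hf heq hp (by simpa [gradient] using hgrad) x)

/-- Euclidean version of Lemma 2.1(i): for a nontrivial C² solution of the Hessian
equation `D²f(x)(v,w) = f(x)·B(x)(v,w)`, the gradient of `f` is nonzero at every
zero of `f`, i.e. `0` is a regular value of `f`. -/
theorem stmt_2 (n : ℕ) (hn : 1 ≤ n)
    (B : EuclideanSpace ℝ (Fin n) →
      EuclideanSpace ℝ (Fin n) →L[ℝ] EuclideanSpace ℝ (Fin n) →L[ℝ] ℝ)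
    (hB : Continuous B)
    (f : EuclideanSpace ℝ (Fin n) → ℝ) (hf : ContDiff ℝ 2 f)
    (heq : ∀ (x v w : EuclideanSpace ℝ (Fin n)),
      fderiv ℝ (fderiv ℝ f) x v w = f x * B x v w)
    (hne : ∃ x, f x ≠ 0) :
    ∀ p : EuclideanSpace ℝ (Fin n), f p = 0 → gradient f p ≠ 0 :=
  stmt_2_general n B hB f hf heq hne
end

section
/- Let Λ > 0, d > 0, and let φ : [0,d] → ℝ be a function with φ(t) > 0 for all t ∈ [0,d] which is Lipschitz with constant Λ, i.e. |φ(s) − φ(t)| ≤ Λ|s − t| for all s, t ∈ [0,d]. Then ∫₀^d φ(t)⁻¹ dt ≥ Λ⁻¹ · ln(1 + Λ d / min(φ(0), φ(d))). -/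
/-!
Lipschitz continuity gives `φ t ≤ φ 0 + Λ t`, so `∫₀^d φ⁻¹` dominates the explicit integral
`∫₀^d (φ 0 + Λ t)⁻¹ = Λ⁻¹ log (1 + Λ d / φ 0)`. Applied to `t ↦ φ (d - t)`, which satisfies the
same hypotheses and has the same integral, this gives the bound with `φ d`, hence with the minimum.
-/

open Set

theorem integral_inv_add_mul {a Λ d : ℝ} (ha : 0 < a) (hΛ : 0 < Λ) (hd : 0 ≤ d) :
    ∫ t in (0:ℝ)..d, (a + Λ * t)⁻¹ = Λ⁻¹ * Real.log (1 + Λ * d / a) := by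
  have hshift : ∫ t in (0:ℝ)..d, (a + Λ * t)⁻¹ = ∫ t in (0:ℝ)..d, (Λ * t + a)⁻¹ := by
    simp only [add_comm a]
  have hzero : (0:ℝ) ∉ uIcc (Λ * 0 + a) (Λ * d + a) := by
    rw [mul_zero, zero_add, uIcc_of_le (by nlinarith)]
    exact fun h => ha.not_ge h.1
  rw [hshift, intervalIntegral.integral_comp_mul_add (fun x : ℝ => x⁻¹) hΛ.ne', integral_inv hzero,
    smul_eq_mul, mul_zero, zero_add, add_div, div_self ha.ne', add_comm]

section LipschitzOnIcc

variable {Λ d : ℝ} {φ : ℝ → ℝ}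

theorem intervalIntegrable_inv_of_abs_sub_le (hΛ : 0 ≤ Λ) (hd : 0 ≤ d)
    (hpos : ∀ t ∈ Icc 0 d, 0 < φ t)
    (hlip : ∀ s ∈ Icc 0 d, ∀ t ∈ Icc 0 d, |φ s - φ t| ≤ Λ * |s - t|) :
    IntervalIntegrable (fun t => (φ t)⁻¹) MeasureTheory.volume 0 d := by
  have hφ : LipschitzOnWith Λ.toNNReal φ (Icc 0 d) :=
    LipschitzOnWith.of_dist_le_mul fun s hs t ht => by
      simpa only [Real.dist_eq, Real.coe_toNNReal _ hΛ] using hlip s hs t ht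
  apply ContinuousOn.intervalIntegrable
  rw [uIcc_of_le hd]
  exact hφ.continuousOn.inv₀ fun t ht => (hpos t ht).ne'

theorem inv_mul_log_le_integral_inv_left (hΛ : 0 < Λ) (hd : 0 ≤ d)
    (hpos : ∀ t ∈ Icc 0 d, 0 < φ t)
    (hlip : ∀ s ∈ Icc 0 d, ∀ t ∈ Icc 0 d, |φ s - φ t| ≤ Λ * |s - t|) :
    Λ⁻¹ * Real.log (1 + Λ * d / φ 0) ≤ ∫ t in (0:ℝ)..d, (φ t)⁻¹ := by
  have h0 : (0:ℝ) ∈ Icc 0 d := ⟨le_rfl, hd⟩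
  have hgrowth : ∀ t ∈ Icc 0 d, φ t ≤ φ 0 + Λ * t := fun t ht => by
    have := (abs_le.1 (hlip t ht 0 h0)).2
    rw [sub_zero, abs_of_nonneg ht.1] at this
    linarith
  rw [← integral_inv_add_mul (hpos 0 h0) hΛ hd]
  refine intervalIntegral.integral_mono_on hd ?_
    (intervalIntegrable_inv_of_abs_sub_le hΛ.le hd hpos hlip)
    fun t ht => inv_anti₀ (hpos t ht) (hgrowth t ht)
  refine (ContinuousOn.inv₀ (by fun_prop) fun t ht => ?_).intervalIntegrable
  rw [uIcc_of_le hd] at ht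
  nlinarith [hpos 0 h0, ht.1]

theorem inv_mul_log_le_integral_inv_right (hΛ : 0 < Λ) (hd : 0 ≤ d)
    (hpos : ∀ t ∈ Icc 0 d, 0 < φ t)
    (hlip : ∀ s ∈ Icc 0 d, ∀ t ∈ Icc 0 d, |φ s - φ t| ≤ Λ * |s - t|) :
    Λ⁻¹ * Real.log (1 + Λ * d / φ d) ≤ ∫ t in (0:ℝ)..d, (φ t)⁻¹ := by
  have hreflect : ∀ t ∈ Icc 0 d, d - t ∈ Icc 0 d := fun t ht =>
    ⟨sub_nonneg.2 ht.2, sub_le_self d ht.1⟩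
  have hrev := inv_mul_log_le_integral_inv_left (φ := fun t => φ (d - t)) hΛ hd
    (fun t ht => hpos _ (hreflect t ht)) fun s hs t ht => by
      simpa only [sub_sub_sub_cancel_left, abs_sub_comm s t]
        using hlip _ (hreflect s hs) _ (hreflect t ht)
  simpa only [sub_zero, sub_self, intervalIntegral.integral_comp_sub_left (fun t => (φ t)⁻¹) d]
    using hrev

end LipschitzOnIcc

/-- Two-endpoint form of the length estimate of Lemma 3.2: a positive `Λ`-Lipschitz
function `φ` on `[0,d]` satisfies `∫₀^d φ⁻¹ ≥ Λ⁻¹ · log(1 + Λd/min(φ(0),φ(d)))`. -/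
theorem stmt_5 (Λ d : ℝ) (hΛ : 0 < Λ) (hd : 0 < d) (φ : ℝ → ℝ)
    (hpos : ∀ t ∈ Set.Icc (0:ℝ) d, 0 < φ t)
    (hlip : ∀ s ∈ Set.Icc (0:ℝ) d, ∀ t ∈ Set.Icc (0:ℝ) d,
      |φ s - φ t| ≤ Λ * |s - t|) :
    Λ⁻¹ * Real.log (1 + Λ * d / min (φ 0) (φ d)) ≤ ∫ t in (0:ℝ)..d, (φ t)⁻¹ := by
  rcases min_choice (φ 0) (φ d) with h | h <;> rw [h]
  · exact inv_mul_log_le_integral_inv_left hΛ hd.le hpos hlip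
  · exact inv_mul_log_le_integral_inv_right hΛ hd.le hpos hlip
end
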